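/- arXiv:1706.01852 — 2 statements merged into one kernel-verified Lean document; each statement's English description precedes it below -/
import Mathlib

section
/- If a seminorm ‖·‖ on ℝ^n is nonincreasing under neighbor averaging (NUNA), then the single-coordinate pooling map iso_i is contractive with respect to ‖·‖: for all x, y ∈ ℝ^n and every i ∈ {1,...,n-1}, ‖iso_i(x) − iso_i(y)‖ ≤ ‖x − y‖. -/
open MeasureTheory Filter ProbabilityTheory

noncomputable section

/-- The isotonic (monotone nondecreasing) cone in `ℝ^n` with the Euclidean norm. -/
def monoCone (n : ℕ) : Set (EuclideanSpace ℝ (Fin n)) :=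
  {v | ∀ i j : Fin n, i ≤ j → v i ≤ v j}

open Classical in
/-- Euclidean projection onto the monotone cone (chosen minimizer of the distance). -/
def isoProj {n : ℕ} (x : EuclideanSpace ℝ (Fin n)) : EuclideanSpace ℝ (Fin n) :=
  if h : ∃ z ∈ monoCone n, ∀ w ∈ monoCone n, dist x z ≤ dist x w then h.choose else x

/-- The map `A_i` replacing entries `i` and `i+1` (0-based) by their common average. -/
def avgMap {n : ℕ} (i : ℕ) (x : EuclideanSpace ℝ (Fin n)) : EuclideanSpace ℝ (Fin n) :=
  WithLp.toLp 2 fun j => if h : i + 1 < n then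
      (if (j : ℕ) = i ∨ (j : ℕ) = i + 1
        then (x ⟨i, by omega⟩ + x ⟨i + 1, h⟩) / 2 else x j)
    else x j

/-- One step of neighbor pooling: average entries `i`, `i+1` if they violate monotonicity. -/
def isoStep {n : ℕ} (i : ℕ) (x : EuclideanSpace ℝ (Fin n)) : EuclideanSpace ℝ (Fin n) :=
  if h : i + 1 < n then
    (if x ⟨i, by omega⟩ ≤ x ⟨i + 1, h⟩ then x else avgMap i x)
  else x

/-- Nonincreasing under neighbor averaging. -/
def NUNA {n : ℕ} (N : Seminorm ℝ (EuclideanSpace ℝ (Fin n))) : Prop :=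
  ∀ x : EuclideanSpace ℝ (Fin n), ∀ i : ℕ, i + 1 < n → N (avgMap i x) ≤ N x

/-- Average of the `m` entries of `x` starting at (0-based) index `a`. -/
def wavg {n : ℕ} (x : EuclideanSpace ℝ (Fin n)) (a m : ℕ) : ℝ :=
  (∑ t ∈ Finset.range m, if h : a + t < n then x ⟨a + t, h⟩ else 0) / m

/-- The sliding window seminorm with weight function `ψ`. -/
def swNorm {n : ℕ} (ψ : ℕ → ℝ) (x : EuclideanSpace ℝ (Fin n)) : ℝ :=
  sSup {r | ∃ a m : ℕ, 1 ≤ m ∧ a + m ≤ n ∧ r = |wavg x a m| * ψ m}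

/-!
When both or neither of `x`, `y` are pooled, `iso_i x - iso_i y` is `A_i (x - y)` or `x - y`.
In the mixed case the difference `A_i x - y` lies on the segment from `x - y` to `A_i (x - y)`,
and a seminorm, being convex, is bounded on that segment by its value at an endpoint, which
NUNA makes `‖x - y‖`.
-/

lemma avgMap_apply {n i : ℕ} (h : i + 1 < n) (x : EuclideanSpace ℝ (Fin n)) (j : Fin n) :
    avgMap i x j =
      if (j : ℕ) = i ∨ (j : ℕ) = i + 1 then (x ⟨i, by omega⟩ + x ⟨i + 1, h⟩) / 2 else x j := by
  simp only [avgMap, PiLp.toLp_apply, dif_pos h]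

lemma avgMap_sub {n : ℕ} (i : ℕ) (x y : EuclideanSpace ℝ (Fin n)) :
    avgMap i (x - y) = avgMap i x - avgMap i y := by
  ext j
  simp only [avgMap, PiLp.sub_apply, PiLp.toLp_apply]
  split_ifs <;> ring

lemma avgMap_sub_mem_segment {n i : ℕ} (h : i + 1 < n) {x y : EuclideanSpace ℝ (Fin n)}
    (hx : x ⟨i + 1, h⟩ < x ⟨i, by omega⟩) (hy : y ⟨i, by omega⟩ ≤ y ⟨i + 1, h⟩) :
    avgMap i x - y ∈ segment ℝ (x - y) (avgMap i (x - y)) := by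
  set gx := x ⟨i, by omega⟩ - x ⟨i + 1, h⟩
  set gy := y ⟨i + 1, h⟩ - y ⟨i, by omega⟩
  have hgx : 0 < gx := sub_pos.2 hx
  have hgy : 0 ≤ gy := sub_nonneg.2 hy
  have hS : gx + gy ≠ 0 := by positivity
  -- `A_i (x - y)` closes the whole gap `gx + gy` of `x - y` at `i`, `A_i x - y` only its part `gx`.
  refine ⟨gy / (gx + gy), gx / (gx + gy), by positivity, by positivity, by field_simp; ring, ?_⟩
  ext j
  simp only [PiLp.add_apply, PiLp.smul_apply, PiLp.sub_apply, smul_eq_mul, avgMap_apply h]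
  rw [div_mul_eq_mul_div, div_mul_eq_mul_div, ← add_div, div_eq_iff hS]
  split_ifs with hj
  · rcases hj with hj | hj
    · rw [show j = ⟨i, by omega⟩ from Fin.ext hj]
      ring
    · rw [show j = ⟨i + 1, h⟩ from Fin.ext hj]
      ring
  · ring

lemma Seminorm.map_avgMap_sub_le {n i : ℕ} {N : Seminorm ℝ (EuclideanSpace ℝ (Fin n))}
    (hN : NUNA N) (h : i + 1 < n) {x y : EuclideanSpace ℝ (Fin n)}
    (hx : x ⟨i + 1, h⟩ < x ⟨i, by omega⟩) (hy : y ⟨i, by omega⟩ ≤ y ⟨i + 1, h⟩) :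
    N (avgMap i x - y) ≤ N (x - y) :=
  (N.convexOn.le_max_of_mem_segment trivial trivial (avgMap_sub_mem_segment h hx hy)).trans
    (max_le le_rfl (hN _ i h))

theorem stmt2 (n : ℕ) (N : Seminorm ℝ (EuclideanSpace ℝ (Fin n))) (hN : NUNA N) :
    ∀ (x y : EuclideanSpace ℝ (Fin n)) (i : ℕ), i + 1 < n →
      N (isoStep i x - isoStep i y) ≤ N (x - y) := by
  intro x y i h
  simp only [isoStep, dif_pos h]
  split_ifs with hx hy hy
  · exact le_rfl
  · rw [map_sub_rev N, map_sub_rev N x]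
    exact N.map_avgMap_sub_le hN h (not_le.1 hy) hx
  · exact N.map_avgMap_sub_le hN h (not_le.1 hx) hy
  · rw [← avgMap_sub]
    exact hN (x - y) i h
end
end

section
/- For any x ∈ ℝ^n and any i ∈ {1,...,n-1}, iso(iso_i(x)) = iso(x); that is, applying one step of neighbor-pooling to a pair of adjacent coordinates that violate monotonicity does not change the isotonic projection. -/
open MeasureTheory Filter ProbabilityTheory

noncomputable section

/-!
A point `z` of the closed convex cone `K` is the projection of `v` iff
`⟪v - z, w - z⟫ ≤ 0` for all `w ∈ K`. If `v_{i+1} ≤ v_i`, the projection `z` of `v` has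
`z_i = z_{i+1}`: otherwise averaging these two coordinates of `z` stays in `K` and violates the
inequality. Let `x_{i+1} ≤ x_i`, let `y` be `x` with coordinates `i, i+1` averaged and `z = iso y`,
so `z_i = z_{i+1}`. Then `⟪x - y, w - z⟫ = (x_i - x_{i+1}) (w_i - w_{i+1}) / 2 ≤ 0` for `w ∈ K`,
so the inequality for `y` implies the one for `x`, and `z = iso x`.
-/

open scoped RealInnerProductSpace

section ConvexProjection

variable {F : Type*} [NormedAddCommGroup F] [InnerProductSpace ℝ F] {K : Set F} {x z : F}

theorem isMinOn_dist_iff_inner_le_zero (hK : Convex ℝ K) (hz : z ∈ K) :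
    IsMinOn (dist x) K z ↔ ∀ w ∈ K, ⟪x - z, w - z⟫ ≤ 0 := by
  rw [← norm_eq_iInf_iff_real_inner_le_zero hK hz]
  have : Nonempty K := ⟨⟨z, hz⟩⟩
  refine ⟨fun h => ?_, fun h => isMinOn_iff.2 fun w hw => ?_⟩
  · simpa only [dist_eq_norm] using (h.iInf_eq hz).symm
  · rw [dist_eq_norm, dist_eq_norm, h]
    exact ciInf_le ⟨0, Set.forall_mem_range.2 fun _ => norm_nonneg _⟩ (⟨w, hw⟩ : K)

theorem exists_isMinOn_dist (hne : K.Nonempty) (hc : IsComplete K) (hK : Convex ℝ K) (x : F) :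
    ∃ z ∈ K, IsMinOn (dist x) K z := by
  obtain ⟨z, hz, h⟩ := exists_norm_eq_iInf_of_complete_convex hne hc hK x
  exact ⟨z, hz, (isMinOn_dist_iff_inner_le_zero hK hz).2
    ((norm_eq_iInf_iff_real_inner_le_zero hK hz).1 h)⟩

theorem eq_of_forall_inner_le_zero {z' : F} (hz : z ∈ K) (hz' : z' ∈ K)
    (h : ∀ w ∈ K, ⟪x - z, w - z⟫ ≤ 0) (h' : ∀ w ∈ K, ⟪x - z', w - z'⟫ ≤ 0) : z = z' := by
  have key : ⟪z - z', z - z'⟫ = ⟪x - z', z - z'⟫ + ⟪x - z, z' - z⟫ := by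
    rw [← neg_sub z z', inner_neg_right, ← sub_eq_add_neg, ← inner_sub_left]
    congr 1
    abel
  rw [← sub_eq_zero, ← real_inner_self_nonpos, key]
  linarith [h z' hz', h' z hz]

end ConvexProjection

theorem convex_monoCone (n : ℕ) : Convex ℝ (monoCone n) := by
  intro u hu v hv a b ha hb _ i j hij
  simp only [PiLp.add_apply, PiLp.smul_apply, smul_eq_mul]
  gcongr
  exacts [hu i j hij, hv i j hij]

theorem isClosed_monoCone (n : ℕ) : IsClosed (monoCone n) := by
  simp only [monoCone, Set.ofPred_forall]
  exact isClosed_iInter fun i => isClosed_iInter fun j => isClosed_iInter fun _ =>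
    isClosed_le (by fun_prop) (by fun_prop)

section isoProj

variable {n : ℕ}

theorem isoProj_mem_and_isMinOn (x : EuclideanSpace ℝ (Fin n)) :
    isoProj x ∈ monoCone n ∧ IsMinOn (dist x) (monoCone n) (isoProj x) := by
  have h : ∃ z ∈ monoCone n, ∀ w ∈ monoCone n, dist x z ≤ dist x w :=
    exists_isMinOn_dist (⟨0, fun _ _ _ => le_rfl⟩ : (monoCone n).Nonempty)
      (isClosed_monoCone n).isComplete (convex_monoCone n) x
  rw [isoProj, dif_pos h]
  exact h.choose_spec

theorem isoProj_mem (x : EuclideanSpace ℝ (Fin n)) : isoProj x ∈ monoCone n :=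
  (isoProj_mem_and_isMinOn x).1

theorem inner_sub_isoProj_le_zero (x : EuclideanSpace ℝ (Fin n)) {w : EuclideanSpace ℝ (Fin n)}
    (hw : w ∈ monoCone n) : ⟪x - isoProj x, w - isoProj x⟫ ≤ 0 :=
  (isMinOn_dist_iff_inner_le_zero (convex_monoCone n) (isoProj_mem x)).1
    (isoProj_mem_and_isMinOn x).2 w hw

theorem isoProj_eq_of_forall_inner_le_zero {x z : EuclideanSpace ℝ (Fin n)}
    (hz : z ∈ monoCone n) (h : ∀ w ∈ monoCone n, ⟪x - z, w - z⟫ ≤ 0) : isoProj x = z :=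
  eq_of_forall_inner_le_zero (isoProj_mem x) hz (fun _ => inner_sub_isoProj_le_zero x) h

end isoProj

theorem avgMap_mem_monoCone {n : ℕ} (i : ℕ) {z : EuclideanSpace ℝ (Fin n)}
    (hz : z ∈ monoCone n) : avgMap i z ∈ monoCone n := by
  rintro ⟨j, hj⟩ ⟨k, hk⟩ hjk
  rw [Fin.mk_le_mk] at hjk
  simp only [avgMap, PiLp.toLp_apply]
  split_ifs with hi hjp hkp hkp
  · rfl
  · have := hz ⟨i, by omega⟩ ⟨i + 1, hi⟩ (Fin.mk_le_mk.2 (by omega))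
    have := hz ⟨i + 1, hi⟩ ⟨k, hk⟩ (Fin.mk_le_mk.2 (by omega))
    linarith
  · have := hz ⟨i, by omega⟩ ⟨i + 1, hi⟩ (Fin.mk_le_mk.2 (by omega))
    have := hz ⟨j, hj⟩ ⟨i, by omega⟩ (Fin.mk_le_mk.2 (by omega))
    linarith
  all_goals exact hz _ _ (Fin.mk_le_mk.2 hjk)

section avgMap

variable {n i : ℕ} (hi : i + 1 < n)

theorem avgMap_eq_add_smul (v : EuclideanSpace ℝ (Fin n)) :
    avgMap i v = v + ((v ⟨i + 1, hi⟩ - v ⟨i, by omega⟩) / 2) •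
      (EuclideanSpace.single ⟨i, by omega⟩ 1 - EuclideanSpace.single ⟨i + 1, hi⟩ 1) := by
  ext ⟨j, hj⟩
  simp only [avgMap, dif_pos hi, PiLp.add_apply, PiLp.smul_apply, PiLp.sub_apply,
    PiLp.single_apply, Fin.ext_iff, PiLp.toLp_apply, smul_eq_mul]
  rcases eq_or_ne j i with rfl | h0
  · simp only [true_or, if_true, if_neg (Nat.ne_add_one j)]
    ring
  rcases eq_or_ne j (i + 1) with rfl | h1
  · simp only [or_true, if_true, if_neg (Nat.add_one_ne_self i)]
    ring
  simp only [h0, h1, or_self, if_false]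
  ring

theorem inner_avgMap_sub_self (v w : EuclideanSpace ℝ (Fin n)) :
    ⟪avgMap i v - v, w⟫ = (v ⟨i + 1, hi⟩ - v ⟨i, by omega⟩) / 2 *
      (w ⟨i, by omega⟩ - w ⟨i + 1, hi⟩) := by
  rw [avgMap_eq_add_smul hi, add_sub_cancel_left, real_inner_smul_left, inner_sub_left,
    EuclideanSpace.inner_single_left, EuclideanSpace.inner_single_left]
  simp

theorem isoProj_apply_eq_of_le {x : EuclideanSpace ℝ (Fin n)}
    (hx : x ⟨i + 1, hi⟩ ≤ x ⟨i, by omega⟩) :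
    isoProj x ⟨i, by omega⟩ = isoProj x ⟨i + 1, hi⟩ := by
  set z := isoProj x
  have hz : z ∈ monoCone n := isoProj_mem x
  have hle : z ⟨i, by omega⟩ ≤ z ⟨i + 1, hi⟩ := hz _ _ (by simp [Fin.le_def])
  have hvi := inner_sub_isoProj_le_zero x (avgMap_mem_monoCone i hz)
  rw [real_inner_comm, inner_avgMap_sub_self hi] at hvi
  simp only [PiLp.sub_apply] at hvi
  by_contra hne
  have hlt := lt_of_le_of_ne hle hne
  nlinarith

theorem isoProj_avgMap_of_le {x : EuclideanSpace ℝ (Fin n)}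
    (hx : x ⟨i + 1, hi⟩ ≤ x ⟨i, by omega⟩) : isoProj (avgMap i x) = isoProj x := by
  set y := avgMap i x
  set z := isoProj y
  have hy : y ⟨i + 1, hi⟩ ≤ y ⟨i, by omega⟩ := by simp [y, avgMap, hi]
  have hz_pair := isoProj_apply_eq_of_le hi hy
  refine (isoProj_eq_of_forall_inner_le_zero (isoProj_mem y) fun w hw => ?_).symm
  have hw_pair : w ⟨i, by omega⟩ ≤ w ⟨i + 1, hi⟩ := hw _ _ (by simp [Fin.le_def])
  have hsplit : ⟪x - z, w - z⟫ = ⟪y - z, w - z⟫ - ⟪y - x, w - z⟫ := by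
    rw [← inner_sub_left]
    congr 1
    abel
  rw [hsplit, inner_avgMap_sub_self hi]
  simp only [PiLp.sub_apply]
  nlinarith [inner_sub_isoProj_le_zero y hw]

end avgMap

theorem stmt5 (n : ℕ) (x : EuclideanSpace ℝ (Fin n)) (i : ℕ) (hi : i + 1 < n) :
    isoProj (isoStep i x) = isoProj x := by
  unfold isoStep
  rw [dif_pos hi]
  split_ifs with hx
  · rfl
  · exact isoProj_avgMap_of_le hi (le_of_not_ge hx)
end
end
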